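/- arXiv:1011.2175 — 5 statements merged into one kernel-verified Lean document; each statement's English description precedes it below -/
import Mathlib

section
/- Let F be a field of characteristic zero, let A be an n×n matrix over F, write its characteristic polynomial as det(x·1 − A) = Σ_{i=0}^{n} a_i x^{n−i} (so a₀ = 1), and set R_k = tr(A^k) for k ≥ 1. Then for every i = 1, …, n one has a_i = ((−1)^i / i!)·det(B_i), where B_i is the i×i matrix whose (j,k) entry equals R_{j−k+1} when j ≥ k, equals j when k = j+1, and equals 0 when k > j+1. In particular a₁ = −R₁, a₂ = ½R₁² − ½R₂, and a₃ = −⅙R₁³ + ½R₂R₁ − ⅓R₃. -/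
open Polynomial Finset Matrix

set_option linter.unusedSectionVars false
set_option linter.unusedVariables false
set_option maxHeartbeats 1000000

section NewtonAux

variable {R : Type*} [CommRing R] {ι : Type*} [Fintype ι] [DecidableEq ι]

lemma my_derivative_finset_prod (s : Finset ι) (f : ι → R[X]) :
    derivative (∏ i ∈ s, f i) = ∑ i ∈ s, (∏ j ∈ s.erase i, f j) * derivative (f i) := by
  classical
  induction s using Finset.induction_on with
  | empty => simp
  | insert a s ha ih =>
    rw [Finset.prod_insert ha, derivative_mul, ih, Finset.sum_insert ha,
      Finset.erase_insert ha, Finset.mul_sum]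
    congr 1
    · ring
    · apply Finset.sum_congr rfl
      intro i hi
      rw [Finset.erase_insert_of_ne (by rintro rfl; exact ha hi),
        Finset.prod_insert (by simp [ha, Finset.mem_erase])]
      ring

lemma my_jacobi (M : Matrix ι ι R[X]) :
    derivative M.det = ∑ r, (M.updateRow r (fun j => derivative (M r j))).det := by
  classical
  rw [Matrix.det_apply']
  rw [map_sum]
  simp only [derivative_mul, derivative_intCast, zero_mul, zero_add,
    my_derivative_finset_prod, Finset.mul_sum]
  have key : ∀ r, (M.updateRow r fun j => derivative (M r j)).det
      = ∑ σ : Equiv.Perm ι, (Equiv.Perm.sign σ : ℤ) *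
          ((∏ i ∈ Finset.univ.erase (σ.symm r), M (σ i) i) * derivative (M r (σ.symm r))) := by
    intro r
    rw [det_apply']
    apply Finset.sum_congr rfl
    intro σ _
    congr 1
    rw [← Finset.prod_erase_mul Finset.univ _ (Finset.mem_univ (σ.symm r))]
    congr 1
    · apply Finset.prod_congr rfl
      intro i hi
      rw [Matrix.updateRow_ne]
      intro h
      exact (Finset.mem_erase.mp hi).1 (by rw [← h, Equiv.symm_apply_apply])
    · rw [Equiv.apply_symm_apply, Matrix.updateRow_self]
  simp_rw [key]
  conv_rhs => rw [Finset.sum_comm]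
  apply Finset.sum_congr rfl
  intro σ _
  refine Fintype.sum_equiv σ _ _ fun i => ?_
  rw [Equiv.symm_apply_apply]

lemma my_deriv_charpoly (A : Matrix ι ι R) :
    derivative (Matrix.charpoly A) = Matrix.trace (adjugate (charmatrix A)) := by
  rw [Matrix.charpoly, my_jacobi, Matrix.trace]
  refine Finset.sum_congr rfl fun i _ => ?_
  rw [Matrix.diag, Matrix.adjugate_apply]
  have hfun : (fun j => derivative (charmatrix A i j)) = Pi.single i 1 := by
    funext j
    by_cases h : i = j
    · subst h; rw [charmatrix_apply_eq, Pi.single_eq_same]; simp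
    · rw [charmatrix_apply_ne _ _ _ h, Pi.single_eq_of_ne (Ne.symm h)]; simp
  rw [hfun]

lemma my_charmatrix_eq (A : Matrix ι ι R) :
    charmatrix A = (X : R[X]) • (1 : Matrix ι ι R[X]) - A.map C := by
  ext i j
  by_cases h : i = j
  · subst h
    simp [charmatrix_apply_eq, Matrix.sub_apply, Matrix.smul_apply, Matrix.one_apply,
      Matrix.map_apply]
  · simp [charmatrix_apply_ne _ _ _ h, Matrix.sub_apply, Matrix.smul_apply,
      Matrix.one_apply_ne h, Matrix.map_apply]

lemma my_iter (A : Matrix ι ι R) (m : ℕ) :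
    (X : R[X])^m • adjugate (charmatrix A) =
      Matrix.charpoly A • (∑ j ∈ Finset.range m, (X : R[X])^(m-1-j) • ((A.map C)^j)) +
        adjugate (charmatrix A) * (A.map C)^m := by
  induction m with
  | zero => simp
  | succ m ih =>
    have hXadj : (X : R[X]) • adjugate (charmatrix A) =
        Matrix.charpoly A • 1 + adjugate (charmatrix A) * (A.map C) := by
      have h1 : adjugate (charmatrix A) * charmatrix A = Matrix.charpoly A • 1 := by
        rw [Matrix.adjugate_mul]; rfl
      calc (X : R[X]) • adjugate (charmatrix A)
          = adjugate (charmatrix A) * ((X : R[X]) • 1) := by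
            rw [Matrix.mul_smul, Matrix.mul_one]
        _ = adjugate (charmatrix A) * (charmatrix A + A.map C) := by
            rw [my_charmatrix_eq A, sub_add_cancel]
        _ = Matrix.charpoly A • 1 + adjugate (charmatrix A) * (A.map C) := by
            rw [Matrix.mul_add, h1]
    calc (X : R[X])^(m+1) • adjugate (charmatrix A)
        = (X : R[X])^m • ((X : R[X]) • adjugate (charmatrix A)) := by
          rw [smul_smul, ← pow_succ]
      _ = (X : R[X])^m • (Matrix.charpoly A • 1 + adjugate (charmatrix A) * (A.map C)) := by
          rw [hXadj]
      _ = Matrix.charpoly A • ((X : R[X])^m • 1) + ((X : R[X])^m • adjugate (charmatrix A)) * (A.map C) := by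
          rw [smul_add, smul_comm, Matrix.smul_mul]
      _ = Matrix.charpoly A • ((X : R[X])^m • 1) +
            (Matrix.charpoly A • (∑ j ∈ Finset.range m, (X : R[X])^(m-1-j) • ((A.map C)^j)) +
              adjugate (charmatrix A) * (A.map C)^m) * (A.map C) := by rw [ih]
      _ = Matrix.charpoly A • ((X : R[X])^m • 1 +
            ∑ j ∈ Finset.range m, (X : R[X])^(m-1-j) • ((A.map C)^(j+1))) +
            adjugate (charmatrix A) * (A.map C)^(m+1) := by
          rw [Matrix.add_mul, Matrix.smul_mul, Finset.sum_mul, smul_add, Matrix.mul_assoc,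
            ← pow_succ, add_assoc]
          congr 2
          · congr 1
            refine Finset.sum_congr rfl fun j _ => ?_
            rw [Matrix.smul_mul, ← pow_succ]
      _ = Matrix.charpoly A • (∑ j ∈ Finset.range (m+1), (X : R[X])^(m-j) • ((A.map C)^j)) +
            adjugate (charmatrix A) * (A.map C)^(m+1) := by
          congr 1
          rw [Finset.sum_range_succ']
          rw [add_comm]
          have e1 : ∀ j ∈ Finset.range m, (X:R[X])^(m-1-j) • ((A.map C)^(j+1)) =
              (X:R[X])^(m-(j+1)) • ((A.map C)^(j+1)) := by
            intro j _
            congr 2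
            omega
          rw [Finset.sum_congr rfl e1]
          simp [add_comm]

lemma my_mapC_pow (A : Matrix ι ι R) (j : ℕ) : (A.map C)^j = (A^j).map (C : R →+* R[X]) := by
  have h : ∀ M : Matrix ι ι R, M.map (C : R →+* R[X]) = (C : R →+* R[X]).mapMatrix M :=
    fun M => rfl
  rw [h, h, map_pow]

lemma my_trace_map (M : Matrix ι ι R) : Matrix.trace (M.map (C : R →+* R[X])) = C (Matrix.trace M) := by
  simp [Matrix.trace, Matrix.diag, Matrix.map_apply]

lemma my_trace_iter (A : Matrix ι ι R) (m : ℕ) :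
    (X : R[X])^m * derivative (Matrix.charpoly A) =
      Matrix.charpoly A * (∑ j ∈ Finset.range m, (X : R[X])^(m-1-j) * C (Matrix.trace (A^j))) +
        Matrix.trace (adjugate (charmatrix A) * (A.map C)^m) := by
  have h := congrArg Matrix.trace (my_iter A m)
  rw [Matrix.trace_add, Matrix.trace_smul, Matrix.trace_smul, Matrix.trace_sum] at h
  simp_rw [my_mapC_pow, Matrix.trace_smul, my_trace_map, smul_eq_mul] at h
  rw [my_deriv_charpoly, my_mapC_pow]
  exact h


end NewtonAux

lemma my_newton {F : Type*} [Field F] {n k : ℕ} (A : Matrix (Fin n) (Fin n) F)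
    (hkn : k ≤ n) :
    (k : F) * A.charpoly.coeff (n - k) =
      - ∑ j ∈ Finset.range k, Matrix.trace (A^(j+1)) * A.charpoly.coeff (n - k + (j+1)) := by
  classical
  have hdeg : A.charpoly.natDegree = n := by
    rw [Matrix.charpoly_natDegree_eq_dim, Fintype.card_fin]
  have gen : ∀ M : Matrix (Fin n) (Fin n) F[X], ∃ D : ℕ, ∀ i j : Fin n,
      (M i j).natDegree ≤ D := by
    intro M
    refine ⟨Finset.univ.sup (fun ij : Fin n × Fin n => (M ij.1 ij.2).natDegree), fun i j => ?_⟩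
    exact Finset.le_sup (f := fun ij : Fin n × Fin n => (M ij.1 ij.2).natDegree)
      (Finset.mem_univ (i, j))
  obtain ⟨D, hDb⟩ := gen (adjugate (charmatrix A))
  have key := congrArg (fun q : F[X] => q.coeff (n + D + 1)) (my_trace_iter A (D + k + 2))
  -- LHS
  have hL : ((X : F[X])^(D + k + 2) * derivative A.charpoly).coeff (n + D + 1)
      = ((n - k : ℕ) : F) * A.charpoly.coeff (n - k) := by
    rw [mul_comm, Polynomial.coeff_mul_X_pow']
    by_cases hlt : k < n
    · have h1 : D + k + 2 ≤ n + D + 1 := by omega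
      rw [if_pos h1]
      have h2 : n + D + 1 - (D + k + 2) = n - k - 1 := by omega
      rw [h2, Polynomial.coeff_derivative]
      have h3 : n - k - 1 + 1 = n - k := by omega
      have hx : 1 ≤ n - k := by omega
      rw [h3, Nat.cast_sub hx]
      ring
    · have h1 : ¬ D + k + 2 ≤ n + D + 1 := by omega
      have hkn' : k = n := by omega
      rw [if_neg h1, hkn']
      simp
  -- remainder
  have hR : (Matrix.trace (adjugate (charmatrix A) * (A.map C)^(D + k + 2))).coeff (n + D + 1)
      = 0 := by
    have hmap : (A.map C)^(D + k + 2) = (A^(D + k + 2)).map (C : F →+* F[X]) := by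
      have h : ∀ M : Matrix (Fin n) (Fin n) F,
          M.map (C : F →+* F[X]) = (C : F →+* F[X]).mapMatrix M := fun M => rfl
      rw [h, h, map_pow]
    rw [hmap, Matrix.trace, Polynomial.finset_sum_coeff]
    apply Finset.sum_eq_zero
    intro i _
    rw [Matrix.diag, Matrix.mul_apply, Polynomial.finset_sum_coeff]
    apply Finset.sum_eq_zero
    intro j _
    rw [Matrix.map_apply, Polynomial.coeff_mul_C]
    have hle := hDb i j
    rw [Polynomial.coeff_eq_zero_of_natDegree_lt (by omega), zero_mul]
  -- main term
  have hM : (A.charpoly * (∑ j ∈ Finset.range (D + k + 2),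
        (X : F[X])^(D + k + 2 - 1 - j) * C (Matrix.trace (A^j)))).coeff (n + D + 1)
      = ∑ j ∈ Finset.range (k+1), Matrix.trace (A^j) * A.charpoly.coeff (n - k + j) := by
    rw [Finset.mul_sum, Polynomial.finset_sum_coeff]
    have hterm : ∀ j ∈ Finset.range (D + k + 2),
        (A.charpoly * ((X : F[X])^(D + k + 2 - 1 - j) * C (Matrix.trace (A^j)))).coeff (n + D + 1)
          = Matrix.trace (A^j) * A.charpoly.coeff (n - k + j) := by
      intro j hj
      rw [Finset.mem_range] at hj
      have harr : A.charpoly * ((X : F[X])^(D + k + 2 - 1 - j) * C (Matrix.trace (A^j)))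
          = (A.charpoly * C (Matrix.trace (A^j))) * (X : F[X])^(D + k + 2 - 1 - j) := by ring
      rw [harr, Polynomial.coeff_mul_X_pow']
      have h1 : D + k + 2 - 1 - j ≤ n + D + 1 := by omega
      rw [if_pos h1, Polynomial.coeff_mul_C]
      by_cases hjk : j ≤ k
      · have h2 : n + D + 1 - (D + k + 2 - 1 - j) = n - k + j := by omega
        rw [h2]; ring
      · rw [Polynomial.coeff_eq_zero_of_natDegree_lt (by omega),
          Polynomial.coeff_eq_zero_of_natDegree_lt (n := n - k + j) (by omega)]
        ring
    rw [Finset.sum_congr rfl hterm]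
    symm
    apply Finset.sum_subset
    · intro x hx
      rw [Finset.mem_range] at hx ⊢
      omega
    · intro x _ hx
      rw [Finset.mem_range] at hx
      push_neg at hx
      rw [Polynomial.coeff_eq_zero_of_natDegree_lt (by omega), mul_zero]
  rw [hL, Polynomial.coeff_add, hR, hM, add_zero] at key
  rw [Finset.sum_range_succ'] at key
  have h0 : Matrix.trace (A^0) * A.charpoly.coeff (n - k + 0) = (n : F) * A.charpoly.coeff (n - k) := by
    rw [pow_zero, Matrix.trace_one, add_zero]
    simp
  rw [h0, Nat.cast_sub hkn] at key
  linear_combination -key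

lemma my_block {F : Type*} [CommRing F] : ∀ (s t : ℕ) (ht : t ≤ s)
    (N : Matrix (Fin s) (Fin s) F)
    (h : ∀ r c : Fin s, t ≤ c.val → r.val < c.val → N r c = 0),
    N.det = (Matrix.of fun r c : Fin t =>
        N ⟨r.1, lt_of_lt_of_le r.2 ht⟩ ⟨c.1, lt_of_lt_of_le c.2 ht⟩).det *
      ∏ c ∈ Finset.univ.filter (fun c : Fin s => t ≤ c.val), N c c := by
  intro s
  induction s with
  | zero =>
    intro t ht N h
    interval_cases t
    simp [Matrix.det_fin_zero]
  | succ s IH =>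
    intro t ht N h
    by_cases hts : t = s + 1
    · subst hts
      have h1 : (Matrix.of fun r c : Fin (s+1) =>
          N ⟨r.1, lt_of_lt_of_le r.2 le_rfl⟩ ⟨c.1, lt_of_lt_of_le c.2 le_rfl⟩) = N := by
        ext r c
        simp
      have h2 : Finset.univ.filter (fun c : Fin (s+1) => s + 1 ≤ c.val) = ∅ := by
        ext c
        simp only [Finset.mem_filter, Finset.mem_univ, true_and, Finset.notMem_empty,
          iff_false]
        omega
      rw [h1, h2]
      simp
    · have ht' : t ≤ s := by omega
      rw [Matrix.det_succ_column N (Fin.last s)]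
      rw [Finset.sum_eq_single (Fin.last s)]
      rotate_left
      · intro i _ hi
        have hiv : i.val < s := by
          have := i.2
          have : i.val ≠ s := fun hc => hi (Fin.ext (by simp [hc]))
          omega
        rw [h i (Fin.last s) (by simp [Fin.val_last]; omega) (by simp [Fin.val_last]; omega)]
        ring
      · intro habs
        exact absurd (Finset.mem_univ _) habs
      have hsign : (-1 : F) ^ ((Fin.last s).val + (Fin.last s).val) = 1 := by
        rw [Fin.val_last, ← two_mul, pow_mul]
        norm_num
      rw [hsign, one_mul, Fin.succAbove_last]
      have hIH := IH t ht' (N.submatrix Fin.castSucc Fin.castSucc)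
        (fun r c hc hrc => h _ _ (by simpa using hc) (by simpa using hrc))
      rw [hIH]
      have hTL : (Matrix.of fun r c : Fin t =>
            (N.submatrix Fin.castSucc Fin.castSucc) ⟨r.1, lt_of_lt_of_le r.2 ht'⟩
              ⟨c.1, lt_of_lt_of_le c.2 ht'⟩)
          = (Matrix.of fun r c : Fin t =>
            N ⟨r.1, lt_of_lt_of_le r.2 ht⟩ ⟨c.1, lt_of_lt_of_le c.2 ht⟩) := by
        ext r c
        simp only [Matrix.of_apply, Matrix.submatrix_apply]
        congr 1 <;> exact Fin.ext (by simp)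
      rw [hTL]
      have hprod : ∏ c ∈ Finset.univ.filter (fun c : Fin (s+1) => t ≤ c.val), N c c
          = (∏ c ∈ Finset.univ.filter (fun c : Fin s => t ≤ c.val),
              N c.castSucc c.castSucc) * N (Fin.last s) (Fin.last s) := by
        rw [Finset.prod_filter, Finset.prod_filter, Fin.prod_univ_castSucc]
        simp only [Fin.coe_castSucc, Fin.val_last]
        rw [if_pos (by omega : t ≤ s)]
      rw [hprod]
      have : ∀ c : Fin s, N.submatrix Fin.castSucc Fin.castSucc c c = N c.castSucc c.castSucc :=
        fun c => rfl
      simp only [this]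
      ring

def Bmat {F : Type*} [CommRing F] (R : ℕ → F) (i : ℕ) : Matrix (Fin i) (Fin i) F :=
  Matrix.of fun j k : Fin i =>
    if k.val ≤ j.val then R (j.val - k.val + 1)
    else if k.val = j.val + 1 then ((j.val + 1 : ℕ) : F)
    else 0

lemma my_fact : ∀ (s t : ℕ), t ≤ s →
    t.factorial * ∏ c ∈ Finset.univ.filter (fun c : Fin s => t ≤ c.val), (c.val + 1)
      = s.factorial := by
  intro s
  induction s with
  | zero =>
    intro t ht
    interval_cases t
    simp
  | succ s IH =>
    intro t ht
    by_cases hts : t = s + 1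
    · subst hts
      have h2 : Finset.univ.filter (fun c : Fin (s+1) => s + 1 ≤ c.val) = ∅ := by
        ext c
        simp only [Finset.mem_filter, Finset.mem_univ, true_and, Finset.notMem_empty, iff_false]
        omega
      rw [h2]
      simp
    · have ht' : t ≤ s := by omega
      rw [Finset.prod_filter, Fin.prod_univ_castSucc]
      simp only [Fin.coe_castSucc, Fin.val_last]
      rw [if_pos ht', ← Finset.prod_filter, ← mul_assoc, IH t ht', Nat.factorial_succ]
      ring

lemma my_detB {F : Type*} [CommRing F] (R : ℕ → F) (s : ℕ) :
    (Bmat R (s+1)).det = ∑ j ∈ Finset.range (s+1),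
      (-1 : F)^(s + j) * R (s + 1 - j) *
        ((Bmat R j).det *
          ∏ c ∈ Finset.univ.filter (fun c : Fin s => j ≤ c.val), ((c.val + 1 : ℕ) : F)) := by
  rw [Matrix.det_succ_row (Bmat R (s+1)) (Fin.last s)]
  rw [← Fin.sum_univ_eq_sum_range]
  apply Finset.sum_congr rfl
  intro j _
  have hjs : j.val ≤ s := by omega
  -- entry value
  have hentry : Bmat R (s+1) (Fin.last s) j = R (s + 1 - j.val) := by
    simp only [Bmat, Matrix.of_apply, Fin.val_last]
    rw [if_pos hjs]
    congr 1
    omega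
  rw [hentry, Fin.succAbove_last, Fin.val_last]
  congr 1
  -- minor determinant
  have hminor := my_block s j.val hjs
    ((Bmat R (s+1)).submatrix Fin.castSucc j.succAbove) ?_
  · rw [hminor]
    congr 1
    · -- top-left block is Bmat R j.val
      congr 1
      ext r c
      have hcj : (⟨c.1, lt_of_lt_of_le c.2 hjs⟩ : Fin s).castSucc < j := by
        rw [Fin.lt_iff_val_lt_val]
        simpa using c.2
      simp only [Matrix.of_apply, Matrix.submatrix_apply]
      rw [Fin.succAbove_of_castSucc_lt _ _ hcj]
      simp only [Bmat, Matrix.of_apply, Fin.coe_castSucc]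
    · -- diagonal product
      apply Finset.prod_congr rfl
      intro c hc
      rw [Finset.mem_filter] at hc
      have hcj : j ≤ c.castSucc := by
        rw [Fin.le_iff_val_le_val]
        simpa using hc.2
      simp only [Matrix.submatrix_apply]
      rw [Fin.succAbove_of_le_castSucc _ _ hcj]
      simp only [Bmat, Matrix.of_apply, Fin.coe_castSucc, Fin.val_succ]
      rw [if_neg (by omega)]
      simp
  · -- zero hypothesis
    intro r c hjc hrc
    simp only [Matrix.submatrix_apply]
    have hcj : j ≤ c.castSucc := by
      rw [Fin.le_iff_val_le_val]
      simpa using hjc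
    rw [Fin.succAbove_of_le_castSucc _ _ hcj]
    simp only [Bmat, Matrix.of_apply, Fin.coe_castSucc, Fin.val_succ]
    rw [if_neg (by omega), if_neg (by omega)]

lemma my_main {F : Type*} [Field F] [CharZero F] {n : ℕ}
    (A : Matrix (Fin n) (Fin n) F)
    (a : ℕ → F) (ha : ∀ i ≤ n, a i = A.charpoly.coeff (n - i))
    (R : ℕ → F) (hR : ∀ k, 1 ≤ k → R k = Matrix.trace (A ^ k)) :
    ∀ i, i ≤ n → a i = ((-1 : F) ^ i / (Nat.factorial i : F)) * (Bmat R i).det := by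
  have hnewt : ∀ i, i ≤ n →
      (i : F) * a i = - ∑ j ∈ Finset.range i, R (j+1) * a (i - (j+1)) := by
    intro i hin
    have h := my_newton A hin
    rw [← ha i hin] at h
    rw [h]
    congr 1
    apply Finset.sum_congr rfl
    intro j hj
    rw [Finset.mem_range] at hj
    rw [hR (j+1) (by omega), ha (i - (j+1)) (by omega)]
    congr 2
    omega
  intro i
  induction i using Nat.strong_induction_on with
  | _ i IH =>
    intro hin
    cases i with
    | zero =>
      have h0 : a 0 = 1 := by
        rw [ha 0 (by omega), Nat.sub_zero]
        have hdeg : A.charpoly.natDegree = n := by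
          rw [Matrix.charpoly_natDegree_eq_dim, Fintype.card_fin]
        have h1 := (Matrix.charpoly_monic A).coeff_natDegree
        rwa [hdeg] at h1
      rw [h0]
      simp [Matrix.det_fin_zero]
    | succ s =>
      have hone : ∀ m : ℕ, (-1 : F)^m * (-1 : F)^m = 1 := by
        intro m
        rw [← mul_pow]
        norm_num
      have hfacne : ∀ m : ℕ, ((m.factorial : ℕ) : F) ≠ 0 := fun m =>
        Nat.cast_ne_zero.mpr (Nat.factorial_ne_zero m)
      have hP : ∀ j, j ≤ s → ((j.factorial : ℕ) : F) *
          (∏ c ∈ Finset.univ.filter (fun c : Fin s => j ≤ c.val), ((c.val + 1 : ℕ) : F))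
            = ((s.factorial : ℕ) : F) := by
        intro j hj
        have h := my_fact s j hj
        have := congrArg (Nat.cast : ℕ → F) h
        push_cast at this ⊢
        convert this using 2
      have hD : ∀ j, j ≤ s → (Bmat R j).det = (-1:F)^j * (j.factorial : F) * a j := by
        intro j hj
        have h := IH j (by omega) (by omega)
        rw [h]
        calc (Bmat R j).det
            = ((-1:F)^j * (-1:F)^j) * (((j.factorial : ℕ):F) / ((j.factorial : ℕ):F))
              * (Bmat R j).det := by
              rw [hone, div_self (hfacne j)]; ring
          _ = (-1:F)^j * (j.factorial : F) *
              ((-1 : F) ^ j / ((j.factorial : ℕ) : F) * (Bmat R j).det) := by ring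
      have hdetexp := my_detB R s
      have hterm : ∀ j ∈ Finset.range (s+1),
          (-1 : F)^(s + j) * R (s + 1 - j) *
            ((Bmat R j).det *
              ∏ c ∈ Finset.univ.filter (fun c : Fin s => j ≤ c.val), ((c.val + 1 : ℕ) : F))
          = (-1:F)^s * (s.factorial : F) * (R (s+1-j) * a j) := by
        intro j hj
        rw [Finset.mem_range] at hj
        have hj' : j ≤ s := by omega
        rw [hD j hj']
        calc (-1 : F)^(s + j) * R (s + 1 - j) *
            ((-1:F)^j * (j.factorial : F) * a j *
              ∏ c ∈ Finset.univ.filter (fun c : Fin s => j ≤ c.val), ((c.val + 1 : ℕ) : F))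
            = (-1:F)^s * ((-1:F)^j * (-1:F)^j) * (R (s+1-j) * a j) *
              ((j.factorial : F) *
                ∏ c ∈ Finset.univ.filter (fun c : Fin s => j ≤ c.val), ((c.val + 1 : ℕ) : F)) := by
              rw [pow_add]; ring
          _ = (-1:F)^s * (s.factorial : F) * (R (s+1-j) * a j) := by
              rw [hone, hP j hj']; ring
      rw [Finset.sum_congr rfl hterm, ← Finset.mul_sum] at hdetexp
      have hreflect : ∑ j ∈ Finset.range (s+1), R (j+1) * a ((s+1) - (j+1))
          = ∑ j ∈ Finset.range (s+1), R (s+1-j) * a j := by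
        rw [← Finset.sum_range_reflect]
        apply Finset.sum_congr rfl
        intro j hj
        rw [Finset.mem_range] at hj
        congr 2 <;> omega
      have hnewt' := hnewt (s+1) hin
      rw [hreflect] at hnewt'
      have hcast : (((s+1).factorial : ℕ) : F) = ((s+1 : ℕ) : F) * ((s.factorial : ℕ) : F) := by
        rw [Nat.factorial_succ]
        push_cast
        ring
      apply mul_left_cancel₀ (show ((s+1:ℕ) : F) ≠ 0 from Nat.cast_ne_zero.mpr (Nat.succ_ne_zero s))
      push_cast at hnewt' ⊢
      rw [hnewt', hdetexp, hcast]
      have hs1 : (-1:F)^(s+1) = -((-1:F)^s) := by rw [pow_succ]; ring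
      rw [hs1]
      push_cast
      have habs : ∀ (S x f g : F), g ≠ 0 → f ≠ 0 → x * x = 1 →
          g * (-x / (g * f) * (x * f * S)) = -S := by
        intro S x f g hg hf hx
        field_simp
        linear_combination (-S) * hx
      exact (habs (∑ j ∈ Finset.range (s+1), R (s+1-j) * a j) ((-1:F)^s)
        ((s.factorial : ℕ) : F) ((s:F)+1)
        (Nat.cast_add_one_ne_zero s) (hfacne s) (hone s)).symm


/-- **Newton determinant formula for characteristic polynomial coefficients.**
For an `n × n` matrix `A` over a field of characteristic zero, writing
`det(x·1 − A) = Σ_{i=0}^{n} a_i x^{n−i}` (so `a i = charpoly.coeff (n - i)`, `a₀ = 1`) and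
`R k = tr(A^k)`, each coefficient `a_i` (`1 ≤ i ≤ n`) equals `((−1)^i / i!)·det B_i`,
where `B_i` is the `i × i` matrix whose (1-indexed) `(j,k)` entry is `R (j−k+1)` for `j ≥ k`,
`j` for `k = j+1`, and `0` for `k > j+1`.  In particular `a₁ = −R₁`,
`a₂ = ½R₁² − ½R₂`, `a₃ = −⅙R₁³ + ½R₂R₁ − ⅓R₃`. -/
theorem stmt0 {F : Type*} [Field F] [CharZero F] {n : ℕ}
    (A : Matrix (Fin n) (Fin n) F)
    (a : ℕ → F) (ha : ∀ i ≤ n, a i = A.charpoly.coeff (n - i))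
    (R : ℕ → F) (hR : ∀ k, 1 ≤ k → R k = Matrix.trace (A ^ k)) :
    (∀ i, 1 ≤ i → i ≤ n →
      a i = ((-1 : F) ^ i / (Nat.factorial i : F)) *
        Matrix.det (Matrix.of fun j k : Fin i =>
          if k.val ≤ j.val then R (j.val - k.val + 1)
          else if k.val = j.val + 1 then ((j.val + 1 : ℕ) : F)
          else 0)) ∧
    (1 ≤ n → a 1 = - R 1) ∧
    (2 ≤ n → a 2 = (1/2) * R 1 ^ 2 - (1/2) * R 2) ∧
    (3 ≤ n → a 3 = -(1/6) * R 1 ^ 3 + (1/2) * R 2 * R 1 - (1/3) * R 3) := by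
  have main := my_main A a ha R hR
  have gen : ∀ i, 1 ≤ i → i ≤ n →
      a i = ((-1 : F) ^ i / (Nat.factorial i : F)) *
        Matrix.det (Matrix.of fun j k : Fin i =>
          if k.val ≤ j.val then R (j.val - k.val + 1)
          else if k.val = j.val + 1 then ((j.val + 1 : ℕ) : F)
          else 0) := fun i _ h2 => main i h2
  refine ⟨gen, ?_, ?_, ?_⟩
  · intro h
    have := gen 1 le_rfl h
    rw [this, Matrix.det_fin_one]
    norm_num
  · intro h
    have := gen 2 (by omega) h
    rw [this, Matrix.det_fin_two]
    simp [Nat.factorial]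
    ring
  · intro h
    have := gen 3 (by omega) h
    rw [this, Matrix.det_fin_three]
    simp [Nat.factorial]
    ring
end

section
/- Let f be a monic real polynomial of degree n having at most m distinct roots in ℂ (where 1 ≤ m ≤ n). Then the discriminant sequence of f satisfies ⁿD_i = 0 for every i with m+1 ≤ i ≤ n. -/
open Polynomial Matrix

/-- Entry `(r, c)` (0-indexed) of the `(2n+1) × (2n+1)` discrimination matrix of a
degree-`n` polynomial whose coefficient sequence is `a` (`a i` = coefficient of `x^(n-i)`):
odd-numbered rows (1-indexed) carry the coefficients of `f`, even-numbered rows those of `f'`. -/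
noncomputable def discEntry (n : ℕ) (a : ℕ → ℝ) (r c : ℕ) : ℝ :=
  if r % 2 = 0 then
    if r / 2 ≤ c ∧ c ≤ r / 2 + n then a (c - r / 2) else 0
  else
    if (r + 1) / 2 ≤ c ∧ c + 1 ≤ (r + 1) / 2 + n then
      ((n - (c - (r + 1) / 2) : ℕ) : ℝ) * a (c - (r + 1) / 2)
    else 0

/-- The `j`-th leading principal minor `d_j` of the discrimination matrix. -/
noncomputable def discMinor (n : ℕ) (a : ℕ → ℝ) (j : ℕ) : ℝ :=
  Matrix.det (Matrix.of fun r c : Fin j => discEntry n a r.val c.val)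

/-- `ⁿD_i = d_{2i}`, the `i`-th member of the discriminant sequence. -/
noncomputable def discD (n : ℕ) (a : ℕ → ℝ) (i : ℕ) : ℝ :=
  discMinor n a (2 * i)

/-- The coefficient sequence of a degree-`n` polynomial: `a i` = coefficient of `x^(n-i)`. -/
noncomputable def coeffSeq (n : ℕ) (f : Polynomial ℝ) (i : ℕ) : ℝ :=
  f.coeff (n - i)

/-- `ⁿD_i` of the discriminant sequence of a degree-`n` real polynomial. -/
noncomputable def polyDiscD (n : ℕ) (f : Polynomial ℝ) (i : ℕ) : ℝ :=
  discD n (coeffSeq n f) i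

/- ------------------ auxiliary lemmas ------------------ -/

private lemma sum_range_two_mul' (N : ℕ) (g : ℕ → ℝ) :
    ∑ r ∈ Finset.range (2 * N), g r
      = ∑ k ∈ Finset.range N, (g (2 * k) + g (2 * k + 1)) := by
  induction N with
  | zero => simp
  | succ n ih =>
      have h2 : 2 * (n + 1) = (2 * n + 1) + 1 := by ring
      rw [h2, Finset.sum_range_succ, Finset.sum_range_succ, ih, Finset.sum_range_succ]
      ring

private lemma X_mul_reflect {d : ℕ} {p : Polynomial ℝ} (hp : p.natDegree ≤ d) :
    (X : Polynomial ℝ) * reflect d p = reflect (d + 1) p := by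
  ext c
  cases c with
  | zero =>
      rw [mul_coeff_zero, coeff_X_zero, zero_mul, coeff_reflect, revAt_le (Nat.zero_le _),
        Nat.sub_zero, coeff_eq_zero_of_natDegree_lt (by omega)]
  | succ k =>
      rw [coeff_X_mul, coeff_reflect, coeff_reflect]
      by_cases hk : k ≤ d
      · rw [revAt_le hk, revAt_le (by omega)]
        congr 1
        omega
      · rw [revAt_eq_self_of_lt (by omega), revAt_eq_self_of_lt (by omega),
          coeff_eq_zero_of_natDegree_lt (by omega), coeff_eq_zero_of_natDegree_lt (by omega)]

private lemma conv_sum (p q : Polynomial ℝ) (I c : ℕ) (hp : ∀ k, I ≤ k → p.coeff k = 0) :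
    ∑ k ∈ Finset.range I, p.coeff k * (if k ≤ c then q.coeff (c - k) else 0)
      = (p * q).coeff c := by
  have hmul : (p * q).coeff c
      = ∑ k ∈ Finset.range (c + 1), p.coeff k * q.coeff (c - k) := by
    rw [coeff_mul]
    exact Finset.Nat.sum_antidiagonal_eq_sum_range_succ (fun x y => p.coeff x * q.coeff y) c
  set T := max I (c + 1) with hT
  have key1 : ∑ k ∈ Finset.range I, p.coeff k * (if k ≤ c then q.coeff (c - k) else 0)
      = ∑ k ∈ Finset.range T, (if k ≤ c then p.coeff k * q.coeff (c - k) else 0) := by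
    rw [show (∑ k ∈ Finset.range I, p.coeff k * (if k ≤ c then q.coeff (c - k) else 0))
        = ∑ k ∈ Finset.range I, (if k ≤ c then p.coeff k * q.coeff (c - k) else 0) from
      Finset.sum_congr rfl fun k _ => by rw [mul_ite, mul_zero]]
    refine Finset.sum_subset (Finset.range_subset_range.mpr (le_max_left _ _)) ?_
    intro k _ hk
    have hIk : I ≤ k := by simpa using hk
    by_cases h : k ≤ c <;> simp [h, hp k hIk]
  have key2 : ∑ k ∈ Finset.range (c + 1), p.coeff k * q.coeff (c - k)
      = ∑ k ∈ Finset.range T, (if k ≤ c then p.coeff k * q.coeff (c - k) else 0) := by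
    rw [show (∑ k ∈ Finset.range (c + 1), p.coeff k * q.coeff (c - k))
        = ∑ k ∈ Finset.range (c + 1), (if k ≤ c then p.coeff k * q.coeff (c - k) else 0) from
      Finset.sum_congr rfl fun k hk =>
        (if_pos (by have := Finset.mem_range.mp hk; omega)).symm]
    refine Finset.sum_subset (Finset.range_subset_range.mpr (le_max_right _ _)) ?_
    intro k _ hk
    have hck : ¬(k < c + 1) := by simpa using hk
    rw [if_neg (by omega)]
  rw [key1, hmul, key2]

/-- Degree lower bound for a common "multiple-root part" divisor. -/
private lemma gcd_deg_bound (n : ℕ) (F : Polynomial ℂ) (hmon : F.Monic)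
    (hdeg : F.natDegree = n) (G : Polynomial ℂ) (hGne : G ≠ 0)
    (hdvd : ∀ z ∈ F.roots.toFinset, (X - C z) ^ (F.roots.count z - 1) ∣ G) :
    n ≤ G.natDegree + F.roots.toFinset.card := by
  classical
  set R := F.roots with hR
  have hcard : Multiset.card R = n := by
    have hs : Splits F := IsAlgClosed.splits F
    rw [← hdeg]
    exact splits_iff_card_roots.mp hs
  set D := ∏ z ∈ R.toFinset, (X - C z) ^ (R.count z - 1) with hD
  have hpair : (↑R.toFinset : Set ℂ).Pairwise
      (Function.onFun IsCoprime fun z => (X - C z) ^ (R.count z - 1)) := by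
    intro x _ y _ hxy
    exact (isCoprime_X_sub_C_of_isUnit_sub ((sub_ne_zero_of_ne hxy).isUnit)).pow
  have hDG : D ∣ G := Finset.prod_dvd_of_coprime hpair fun z hz => hdvd z hz
  have hdegD : D.natDegree = ∑ z ∈ R.toFinset, (R.count z - 1) := by
    rw [hD, natDegree_prod _ _ fun z _ => pow_ne_zero _ (X_sub_C_ne_zero z)]
    exact Finset.sum_congr rfl fun z _ => by rw [natDegree_pow, natDegree_X_sub_C, mul_one]
  have hsum : ∑ z ∈ R.toFinset, (R.count z - 1) + R.toFinset.card = n := by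
    have h1 : ∑ z ∈ R.toFinset, ((R.count z - 1) + 1) = ∑ z ∈ R.toFinset, R.count z :=
      Finset.sum_congr rfl fun z hz => by
        have : 0 < R.count z := Multiset.count_pos.mpr (Multiset.mem_toFinset.mp hz)
        omega
    calc ∑ z ∈ R.toFinset, (R.count z - 1) + R.toFinset.card
        = ∑ z ∈ R.toFinset, ((R.count z - 1) + 1) := by
          rw [Finset.sum_add_distrib, Finset.sum_const, smul_eq_mul, mul_one]
      _ = ∑ z ∈ R.toFinset, R.count z := h1
      _ = Multiset.card R := Multiset.toFinset_sum_count_eq R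
      _ = n := hcard
  have := natDegree_le_of_dvd hDG hGne
  omega

/-- **Few distinct roots force vanishing of the tail of the discriminant sequence.**
If a monic real polynomial `f` of degree `n` has at most `m` distinct roots in `ℂ`
(`1 ≤ m ≤ n`), then `ⁿD_i = 0` for every `i` with `m + 1 ≤ i ≤ n`. -/
theorem stmt6 (n m : ℕ) (hm : 1 ≤ m) (hmn : m ≤ n)
    (f : Polynomial ℝ) (hmon : f.Monic) (hdeg : f.natDegree = n)
    (hroots : (f.map (algebraMap ℝ ℂ)).roots.toFinset.card ≤ m) :
    ∀ i, m + 1 ≤ i → i ≤ n → polyDiscD n f i = 0 := by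
  classical
  intro i him hin
  have hn1 : 1 ≤ n := le_trans hm hmn
  have hi2 : 2 ≤ i := by omega
  have hfne : f ≠ 0 := hmon.ne_zero
  -- degree of the derivative
  have hderivdeg : f.derivative.natDegree = n - 1 := by
    have hd := degree_derivative_eq f (by omega)
    rw [hdeg] at hd
    exact natDegree_eq_of_degree_eq_some hd
  have hderivne : f.derivative ≠ 0 := by
    intro h
    have hd := degree_derivative_eq f (by omega)
    rw [h, degree_zero] at hd
    exact absurd hd.symm (by simp)
  -- the gcd and its degree bound
  set g := EuclideanDomain.gcd f f.derivative with hg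
  have hgne : g ≠ 0 := by
    intro h
    exact hfne (EuclideanDomain.gcd_eq_zero_iff.mp h).1
  have hgcd_deg : n ≤ g.natDegree + m := by
    set φ := algebraMap ℝ ℂ with hφ
    set F := f.map φ with hF
    have hFmon : F.Monic := hmon.map φ
    have hFdeg : F.natDegree = n := by rw [hF, hmon.natDegree_map]; exact hdeg
    set G := g.map φ with hG
    have hGgcd : EuclideanDomain.gcd F F.derivative = G := by
      rw [hG, hg, ← gcd_map, hF, derivative_map]
    have hGne : G ≠ 0 := by
      simp only [hG, Ne, Polynomial.map_eq_zero]
      exact hgne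
    have hdvd : ∀ z ∈ F.roots.toFinset, (X - C z) ^ (F.roots.count z - 1) ∣ G := by
      intro z hz
      have hzr : z ∈ F.roots := Multiset.mem_toFinset.mp hz
      have hzroot : F.IsRoot z := isRoot_of_mem_roots hzr
      have h1 : (X - C z) ^ (F.roots.count z - 1) ∣ F := by
        refine dvd_trans (pow_dvd_pow _ (Nat.sub_le _ 1)) ?_
        rw [count_roots]
        exact pow_rootMultiplicity_dvd F z
      have h2 : (X - C z) ^ (F.roots.count z - 1) ∣ F.derivative := by
        have he : F.roots.count z - 1 = rootMultiplicity z F.derivative := by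
          rw [count_roots, derivative_rootMultiplicity_of_root hzroot]
        rw [he]
        exact pow_rootMultiplicity_dvd _ z
      rw [← hGgcd]
      exact EuclideanDomain.dvd_gcd h1 h2
    have hbound := gcd_deg_bound n F hFmon hFdeg G hGne hdvd
    have hGdeg : G.natDegree = g.natDegree := by rw [hG, natDegree_map]
    omega
  -- the cofactors U and V
  obtain ⟨V, hV⟩ : g ∣ f := EuclideanDomain.gcd_dvd_left f f.derivative
  obtain ⟨U, hU⟩ : g ∣ f.derivative := EuclideanDomain.gcd_dvd_right f f.derivative
  have hVne : V ≠ 0 := by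
    intro h; rw [h, mul_zero] at hV; exact hfne hV
  have hUne : U ≠ 0 := by
    intro h; rw [h, mul_zero] at hU; exact hderivne hU
  have hgV : g.natDegree + V.natDegree = n := by
    have h := natDegree_mul hgne hVne
    rw [← hV, hdeg] at h
    omega
  have hgU : g.natDegree + U.natDegree = n - 1 := by
    have h := natDegree_mul hgne hUne
    rw [← hU, hderivdeg] at h
    omega
  have hVi : V.natDegree ≤ i - 1 := by omega
  have hUi : U.natDegree ≤ i - 1 := by omega
  -- the fundamental identity  U * f = V * f'
  have hUf : U * f = V * f.derivative := by
    calc U * f = U * (g * V) := by rw [← hV]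
      _ = (g * U) * V := by ring
      _ = f.derivative * V := by rw [← hU]
      _ = V * f.derivative := mul_comm _ _
  -- the four polynomials
  set A := reflect n f with hA'
  set B := reflect (n - 1) f.derivative with hB'
  set α := -(reflect (i - 1) U) with hα'
  set β := (X : Polynomial ℝ) * reflect (i - 1) V with hβ'
  -- key identity
  have hVf'deg : (V * f.derivative).natDegree ≤ (i - 1) + (n - 1) :=
    natDegree_mul_le.trans (add_le_add hVi (le_of_eq hderivdeg))
  have key : α * A + β * B = 0 := by
    have h1 : α * A = -(reflect ((i - 1) + n) (U * f)) := by
      rw [hα', hA', neg_mul, reflect_mul U f hUi (le_of_eq hdeg)]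
    have h2 : β * B = reflect ((i - 1) + n) (V * f.derivative) := by
      rw [hβ', hB', mul_assoc, ← reflect_mul V f.derivative hVi (le_of_eq hderivdeg),
        X_mul_reflect hVf'deg, show (i - 1) + (n - 1) + 1 = (i - 1) + n by omega]
    rw [h1, h2, hUf, neg_add_cancel]
  -- coefficient bounds
  have hreflV : (reflect (i - 1) V).natDegree ≤ i - 1 := by
    refine natDegree_le_iff_coeff_eq_zero.mpr fun N hN => ?_
    rw [coeff_reflect, revAt_eq_self_of_lt hN]
    exact coeff_eq_zero_of_natDegree_lt (lt_of_le_of_lt hVi hN)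
  have hβdeg : β.natDegree ≤ i := by
    refine natDegree_mul_le.trans ?_
    rw [natDegree_X]
    omega
  have hαbound : ∀ k, i ≤ k → α.coeff k = 0 := by
    intro k hk
    rw [hα', coeff_neg, coeff_reflect, revAt_eq_self_of_lt (by omega),
      coeff_eq_zero_of_natDegree_lt (by omega), neg_zero]
  have hβbound : ∀ l, i + 1 ≤ l → β.coeff l = 0 := fun l hl =>
    coeff_eq_zero_of_natDegree_lt (by omega)
  have hβ0 : β.coeff 0 = 0 := by
    rw [hβ', mul_coeff_zero, coeff_X_zero, zero_mul]
  -- row descriptions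
  have hA : ∀ k c : ℕ, discEntry n (coeffSeq n f) (2 * k) c
      = if k ≤ c then A.coeff (c - k) else 0 := by
    intro k c
    have e1 : (2 * k) % 2 = 0 := by omega
    have e2 : (2 * k) / 2 = k := by omega
    rw [discEntry, if_pos e1, e2]
    by_cases h1 : k ≤ c
    · by_cases h2 : c ≤ k + n
      · rw [if_pos ⟨h1, h2⟩, if_pos h1, hA', coeff_reflect, revAt_le (by omega)]
        rfl
      · rw [if_neg (by tauto), if_pos h1, hA', coeff_reflect,
          revAt_eq_self_of_lt (by omega), coeff_eq_zero_of_natDegree_lt (by omega)]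
    · rw [if_neg (by tauto), if_neg h1]
  have hB : ∀ k c : ℕ, discEntry n (coeffSeq n f) (2 * k + 1) c
      = if k + 1 ≤ c then B.coeff (c - (k + 1)) else 0 := by
    intro k c
    have e1 : ¬((2 * k + 1) % 2 = 0) := by omega
    have e2 : (2 * k + 1 + 1) / 2 = k + 1 := by omega
    rw [discEntry, if_neg e1, e2]
    by_cases h1 : k + 1 ≤ c
    · by_cases h2 : c + 1 ≤ k + 1 + n
      · rw [if_pos ⟨h1, h2⟩, if_pos h1, hB', coeff_reflect,
          revAt_le (by omega : c - (k + 1) ≤ n - 1), coeff_derivative]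
        have h3 : n - 1 - (c - (k + 1)) + 1 = n - (c - (k + 1)) := by omega
        have h4 : ((n - (c - (k + 1)) : ℕ) : ℝ)
            = ((n - 1 - (c - (k + 1)) : ℕ) : ℝ) + 1 := by
          rw [show n - (c - (k + 1)) = n - 1 - (c - (k + 1)) + 1 from h3.symm,
            Nat.cast_add, Nat.cast_one]
        rw [h3, h4, coeffSeq]
        ring
      · rw [if_neg (by tauto), if_pos h1, hB', coeff_reflect,
          revAt_eq_self_of_lt (by omega), coeff_eq_zero_of_natDegree_lt (by omega)]
    · rw [if_neg (by tauto), if_neg h1]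
  -- the dependent vector
  have hβne : β ≠ 0 := by
    rw [hβ']
    exact mul_ne_zero X_ne_zero (by rw [Ne, reflect_eq_zero_iff]; exact hVne)
  set j := β.natDegree with hj'
  have hjc : β.coeff j ≠ 0 := by
    rw [hj', coeff_natDegree]
    exact leadingCoeff_ne_zero.mpr hβne
  have hj1 : 1 ≤ j := by
    by_contra h
    exact hjc (by rw [show j = 0 by omega]; exact hβ0)
  have hji : j ≤ i := hβdeg
  set w : Fin (2 * i) → ℝ := fun r =>
    if r.val % 2 = 0 then α.coeff (r.val / 2) else β.coeff ((r.val + 1) / 2) with hw'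
  have hw0 : w ≠ 0 := by
    intro h
    have hlt : 2 * j - 1 < 2 * i := by omega
    have := congrFun h ⟨2 * j - 1, hlt⟩
    simp only [Pi.zero_apply, hw', Fin.val_mk] at this
    rw [if_neg (by omega : ¬((2 * j - 1) % 2 = 0)),
      show (2 * j - 1 + 1) / 2 = j by omega] at this
    exact hjc this
  -- the matrix
  show Matrix.det (Matrix.of fun r c : Fin (2 * i) =>
      discEntry n (coeffSeq n f) r.val c.val) = 0
  refine Matrix.exists_vecMul_eq_zero_iff.mp ⟨w, hw0, ?_⟩
  funext c
  simp only [Matrix.vecMul, dotProduct, Matrix.of_apply, Pi.zero_apply]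
  have hsum : ∑ r : Fin (2 * i), w r * discEntry n (coeffSeq n f) r.val c.val
      = ∑ r ∈ Finset.range (2 * i),
          (if r % 2 = 0 then α.coeff (r / 2) else β.coeff ((r + 1) / 2))
            * discEntry n (coeffSeq n f) r c.val := by
    exact Fin.sum_univ_eq_sum_range
      (fun r => (if r % 2 = 0 then α.coeff (r / 2) else β.coeff ((r + 1) / 2))
        * discEntry n (coeffSeq n f) r c.val) (2 * i)
  rw [hsum, sum_range_two_mul']
  have heval : ∀ k ∈ Finset.range i,
      ((if (2 * k) % 2 = 0 then α.coeff ((2 * k) / 2) else β.coeff ((2 * k + 1) / 2))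
          * discEntry n (coeffSeq n f) (2 * k) c.val
        + (if (2 * k + 1) % 2 = 0 then α.coeff ((2 * k + 1) / 2)
            else β.coeff ((2 * k + 1 + 1) / 2))
          * discEntry n (coeffSeq n f) (2 * k + 1) c.val)
      = α.coeff k * (if k ≤ c.val then A.coeff (c.val - k) else 0)
        + β.coeff (k + 1) * (if k + 1 ≤ c.val then B.coeff (c.val - (k + 1)) else 0) := by
    intro k _
    rw [if_pos (by omega : (2 * k) % 2 = 0), if_neg (by omega : ¬((2 * k + 1) % 2 = 0)),
      show (2 * k) / 2 = k by omega, show (2 * k + 1 + 1) / 2 = k + 1 by omega,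
      hA k c.val, hB k c.val]
  rw [Finset.sum_congr rfl heval, Finset.sum_add_distrib]
  have hodd : ∑ k ∈ Finset.range i,
      β.coeff (k + 1) * (if k + 1 ≤ c.val then B.coeff (c.val - (k + 1)) else 0)
      = (β * B).coeff c.val := by
    have hs := Finset.sum_range_succ' (fun l =>
      β.coeff l * (if l ≤ c.val then B.coeff (c.val - l) else 0)) i
    rw [← conv_sum β B (i + 1) c.val hβbound, hs, hβ0, zero_mul, add_zero]
  rw [conv_sum α A i c.val hαbound, hodd, ← coeff_add, key, coeff_zero]
end

section
/- Let S be a real 4×4 matrix with tr(S) = 0, and define s₂ = (1/12)·tr(S²), s₃ = (1/24)·tr(S³), and s₄ = (1/48)·[tr(S⁴) − ¼·(tr S²)²]. If the characteristic polynomial of S has a repeated root in ℂ (i.e. S has an eigenvalue of algebraic multiplicity at least 2, as holds when S is a trace-free Ricci tensor of algebraic type II or D in four dimensions), then the syzygy s₃²·(4s₂³ − 6s₂s₄ + s₃²) − s₄²·(3s₂² − 4s₄) = 0 holds. -/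
open Polynomial Matrix

private lemma detfour {R} [CommRing R] (M : Matrix (Fin 4) (Fin 4) R) : M.det = M 0 0*M 1 1*M 2 2*M 3 3 - M 0 0*M 1 1*M 2 3*M 3 2 - M 0 0*M 1 2*M 2 1*M 3 3 + M 0 0*M 1 2*M 2 3*M 3 1 + M 0 0*M 1 3*M 2 1*M 3 2 - M 0 0*M 1 3*M 2 2*M 3 1 - M 0 1*M 1 0*M 2 2*M 3 3 + M 0 1*M 1 0*M 2 3*M 3 2 + M 0 1*M 1 2*M 2 0*M 3 3 - M 0 1*M 1 2*M 2 3*M 3 0 - M 0 1*M 1 3*M 2 0*M 3 2 + M 0 1*M 1 3*M 2 2*M 3 0 + M 0 2*M 1 0*M 2 1*M 3 3 - M 0 2*M 1 0*M 2 3*M 3 1 - M 0 2*M 1 1*M 2 0*M 3 3 + M 0 2*M 1 1*M 2 3*M 3 0 + M 0 2*M 1 3*M 2 0*M 3 1 - M 0 2*M 1 3*M 2 1*M 3 0 - M 0 3*M 1 0*M 2 1*M 3 2 + M 0 3*M 1 0*M 2 2*M 3 1 + M 0 3*M 1 1*M 2 0*M 3 2 - M 0 3*M 1 1*M 2 2*M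 3 0 - M 0 3*M 1 2*M 2 0*M 3 1 + M 0 3*M 1 2*M 2 1*M 3 0 := by
  rw [Matrix.det_succ_row_zero]
  simp [Fin.sum_univ_succ, Matrix.det_fin_three, show (Fin.succ 2 : Fin 4) = 3 from rfl,
    show ((2:Fin 4).succAbove 2 : Fin 4) = 3 from rfl,
    show ((1:Fin 4).succAbove 2 : Fin 4) = 3 from rfl,
    show ((3:Fin 4).succAbove 2 : Fin 4) = 2 from rfl,
    show (Fin.castSucc 2 : Fin 4) = 2 from rfl]
  ring

private lemma monic_deg4 {R} [CommRing R] {p : R[X]} (hm : p.Monic) (hd : p.natDegree = 4) :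
    p = X^4 + C (p.coeff 3)*X^3 + C (p.coeff 2)*X^2 + C (p.coeff 1)*X + C (p.coeff 0) := by
  have h5 : p.natDegree < 5 := by omega
  have hs := p.as_sum_range' 5 h5
  rw [hs]
  have h4 : p.coeff 4 = 1 := by rw [← hd]; exact hm.coeff_natDegree
  simp [Finset.sum_range_succ, ← Polynomial.C_mul_X_pow_eq_monomial, h4]
  ring

private lemma monic_deg2 {R} [CommRing R] {p : R[X]} (hm : p.Monic) (hd : p.natDegree = 2) :
    p = X^2 + C (p.coeff 1)*X + C (p.coeff 0) := by
  have h3 : p.natDegree < 3 := by omega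
  have hs := p.as_sum_range' 3 h3
  rw [hs]
  have h2 : p.coeff 2 = 1 := by rw [← hd]; exact hm.coeff_natDegree
  simp [Finset.sum_range_succ, ← Polynomial.C_mul_X_pow_eq_monomial, h2]
  ring

private lemma hevalp (S : Matrix (Fin 4) (Fin 4) ℝ) (t : ℝ) :
    (S.charpoly).eval t = Matrix.det (Matrix.of fun i j => (if i = j then t else 0) - S i j) := by
  rw [Matrix.charpoly, ← Polynomial.coe_evalRingHom, RingHom.map_det]
  congr 1
  ext i j
  by_cases h : i = j
  · subst h; simp [charmatrix_apply_eq]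
  · simp [charmatrix_apply_ne _ _ _ h, h]

set_option maxHeartbeats 2000000 in
private lemma G1 (S : Matrix (Fin 4) (Fin 4) ℝ) :
    det (Matrix.of fun i j => (if i = j then (1:ℝ) else 0) - S i j)
    + det (Matrix.of fun i j => (if i = j then (-1:ℝ) else 0) - S i j)
    - 2 * det (Matrix.of fun i j => (if i = j then (0:ℝ) else 0) - S i j) - 2
    = (Matrix.trace S)^2 - Matrix.trace (S^2) := by
  simp only [detfour, Matrix.of_apply, Fin.reduceEq, reduceIte, if_true, Matrix.trace,
    Matrix.diag, pow_two, Matrix.mul_apply, Fin.sum_univ_four]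
  ring

set_option maxHeartbeats 4000000 in
private lemma G2 (S : Matrix (Fin 4) (Fin 4) ℝ) :
    3 * (det (Matrix.of fun i j => (if i = j then (1:ℝ) else 0) - S i j)
      - det (Matrix.of fun i j => (if i = j then (-1:ℝ) else 0) - S i j))
    + 6 * Matrix.trace S + (Matrix.trace S)^3
    - 3 * Matrix.trace S * Matrix.trace (S^2) + 2 * Matrix.trace (S^3) = 0 := by
  simp only [detfour, Matrix.of_apply, Fin.reduceEq, reduceIte, if_true, Matrix.trace,
    Matrix.diag, pow_succ, pow_zero, one_mul, Matrix.mul_apply, Fin.sum_univ_four]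
  ring

/-- **The 4D Ricci type II/D syzygy.**
For a real `4 × 4` matrix `S` with `tr S = 0`, setting `s₂ = (1/12)tr(S²)`,
`s₃ = (1/24)tr(S³)` and `s₄ = (1/48)[tr(S⁴) − ¼(tr S²)²]`:
if the characteristic polynomial of `S` has a repeated root in `ℂ` (an eigenvalue of
algebraic multiplicity at least 2), then
`s₃²(4s₂³ − 6s₂s₄ + s₃²) − s₄²(3s₂² − 4s₄) = 0`. -/
theorem stmt10 (S : Matrix (Fin 4) (Fin 4) ℝ) (htr : Matrix.trace S = 0)
    (s2 s3 s4 : ℝ)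
    (hs2 : s2 = (1/12) * Matrix.trace (S ^ 2))
    (hs3 : s3 = (1/24) * Matrix.trace (S ^ 3))
    (hs4 : s4 = (1/48) * (Matrix.trace (S ^ 4) - (1/4) * (Matrix.trace (S ^ 2)) ^ 2))
    (hrep : ∃ z : ℂ, 2 ≤ Polynomial.rootMultiplicity z
      (S.charpoly.map (algebraMap ℝ ℂ))) :
    s3 ^ 2 * (4 * s2 ^ 3 - 6 * s2 * s4 + s3 ^ 2) - s4 ^ 2 * (3 * s2 ^ 2 - 4 * s4) = 0 := by
  set p := S.charpoly with hp
  have hmonic : p.Monic := S.charpoly_monic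
  have hdeg : p.natDegree = 4 := by
    rw [hp, Matrix.charpoly_natDegree_eq_dim]; simp
  set b := p.coeff 2 with hb
  set c := p.coeff 1 with hc
  set d0 := p.coeff 0 with hd0
  -- the cubic coefficient vanishes
  have ha : p.coeff 3 = 0 := by
    have h := Matrix.trace_eq_neg_charpoly_coeff S
    rw [htr] at h
    have : Fintype.card (Fin 4) - 1 = 3 := by simp
    rw [this] at h
    linarith [h]
  have hexp : p = X^4 + C b*X^2 + C c*X + C d0 := by
    have h := monic_deg4 hmonic hdeg
    rw [ha] at h
    simpa using h
  -- evaluation values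
  have hev1 : p.eval 1 = 1 + b + c + d0 := by rw [hexp]; simp
  have hevm1 : p.eval (-1) = 1 + b - c + d0 := by rw [hexp]; simp; ring
  have hev0 : p.eval 0 = d0 := by rw [hexp]; simp
  have hE1 : det (Matrix.of fun i j => (if i = j then (1:ℝ) else 0) - S i j)
      = 1 + b + c + d0 := by rw [← hevalp S 1]; exact hev1
  have hEm1 : det (Matrix.of fun i j => (if i = j then (-1:ℝ) else 0) - S i j)
      = 1 + b - c + d0 := by rw [← hevalp S (-1)]; exact hevm1
  have hE0 : det (Matrix.of fun i j => (if i = j then (0:ℝ) else 0) - S i j)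
      = d0 := by rw [← hevalp S 0]; exact hev0
  -- Newton identities
  have hT2 : Matrix.trace (S^2) = -2*b := by
    have g := G1 S
    rw [hE1, hEm1, hE0] at g
    linear_combination g + Matrix.trace S * htr
  have hT3 : Matrix.trace (S^3) = -3*c := by
    have g := G2 S
    rw [hE1, hEm1] at g
    linear_combination (1/2 : ℝ) * g
      + (-3 - (Matrix.trace S)^2/2 + (3/2)*Matrix.trace (S^2)) * htr
  -- Cayley–Hamilton for the quartic trace
  have hT4 : Matrix.trace (S^4) = 2*b^2 - 4*d0 := by
    have hCH : Polynomial.aeval S p = 0 := Matrix.aeval_self_charpoly S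
    rw [hexp] at hCH
    simp only [map_add, map_pow, _root_.map_mul, aeval_X, aeval_C,
      Algebra.algebraMap_eq_smul_one, smul_mul_assoc, one_mul] at hCH
    have htrCH := congrArg Matrix.trace hCH
    simp only [Matrix.trace_add, Matrix.trace_smul, Matrix.trace_one, Matrix.trace_zero,
      smul_eq_mul] at htrCH
    have hcard : (Fintype.card (Fin 4) : ℝ) = 4 := by simp
    rw [hcard] at htrCH
    linear_combination htrCH - b * hT2 - c * htr
  -- the complex factorization
  obtain ⟨z, hz⟩ := hrep
  set pC := p.map (algebraMap ℝ ℂ) with hpC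
  have hpCmonic : pC.Monic := hmonic.map _
  have hpCdeg : pC.natDegree = 4 := by
    rw [hpC, hmonic.natDegree_map, hdeg]
  have hdvd : (X - C z)^2 ∣ pC :=
    dvd_trans (pow_dvd_pow _ hz) (Polynomial.pow_rootMultiplicity_dvd pC z)
  obtain ⟨q, hq⟩ := hdvd
  have h2m : ((X - C z)^2).Monic := (monic_X_sub_C z).pow 2
  have hqmonic : q.Monic := by
    apply Polynomial.Monic.of_mul_monic_left h2m
    rw [← hq]; exact hpCmonic
  have hqdeg : q.natDegree = 2 := by
    have hd4 : pC.natDegree = 4 := hpCdeg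
    rw [hq, h2m.natDegree_mul hqmonic] at hd4
    have : ((X - C z)^2).natDegree = 2 := by
      rw [natDegree_pow, natDegree_X_sub_C]
    omega
  set e := q.coeff 1 with he'
  set f := q.coeff 0 with hf'
  have hfact : pC = (X - C z)^2 * (X^2 + C e*X + C f) := by
    rw [hq]; congr 1; exact monic_deg2 hqmonic hqdeg
  have hexpand : pC = X^4 + C (e - 2*z) * X^3 + C (f - 2*e*z + z^2) * X^2
      + C (e*z^2 - 2*z*f) * X + C (z^2*f) := by
    rw [hfact]
    simp only [map_sub, map_add, _root_.map_mul, map_pow, map_ofNat]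
    ring
  have hcoeff : ∀ k : ℕ, pC.coeff k = algebraMap ℝ ℂ (p.coeff k) := fun k =>
    Polynomial.coeff_map _ k
  have hc3C : (0 : ℂ) = e - 2*z := by
    have h := hcoeff 3
    rw [ha, map_zero] at h
    rw [← h, hexpand]
    simp only [coeff_add, coeff_C_mul, coeff_X_pow, coeff_C, coeff_X]
    norm_num
  have hc2C : algebraMap ℝ ℂ b = f - 2*e*z + z^2 := by
    rw [← hcoeff 2, hexpand]
    simp only [coeff_add, coeff_C_mul, coeff_X_pow, coeff_C, coeff_X]
    norm_num
  have hc1C : algebraMap ℝ ℂ c = e*z^2 - 2*z*f := by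
    rw [← hcoeff 1, hexpand]
    simp only [coeff_add, coeff_C_mul, coeff_X_pow, coeff_C, coeff_X]
    norm_num
  have hc0C : algebraMap ℝ ℂ d0 = z^2*f := by
    rw [← hcoeff 0, hexpand]
    simp only [coeff_add, coeff_C_mul, coeff_X_pow, coeff_C, coeff_X]
    norm_num
  have he2z : e = 2*z := by linear_combination -hc3C
  have hB : algebraMap ℝ ℂ b = f - 3*z^2 := by
    rw [he2z] at hc2C; linear_combination hc2C
  have hCc : algebraMap ℝ ℂ c = 2*z^3 - 2*z*f := by
    rw [he2z] at hc1C; linear_combination hc1C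
  -- the real discriminant vanishes
  have hdisc : 256*d0^3 - 128*b^2*d0^2 + 144*b*c^2*d0 - 27*c^4 + 16*b^4*d0 - 4*b^3*c^2 = 0 := by
    apply (algebraMap ℝ ℂ).injective
    simp only [map_add, map_sub, _root_.map_mul, map_pow, map_ofNat, map_zero]
    rw [hB, hCc, hc0C]
    ring
  -- assemble
  rw [hs2, hs3, hs4, hT2, hT3, hT4]
  linear_combination (-(1:ℝ)/110592) * hdisc
end

section
/- Let d ≥ 1 and e ≥ 0, set N = 2d + e, and let C be an N×N real block lower-triangular matrix whose diagonal blocks are, in order, a d×d matrix M, an e×e matrix Ψ, and Mᵗ. Then C has at most N − d distinct eigenvalues in ℂ, and the discriminant sequence of its characteristic polynomial satisfies ᴺD_N = ᴺD_{N−1} = ⋯ = ᴺD_{N−d+1} = 0. (Applied to the Weyl bivector operator in n spacetime dimensions, with d = n−2 and N = n(n−1)/2, these are the necessary scalar-invariant syzygies for Weyl type II or D.) -/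
open Polynomial Matrix

lemma myCharpolyTranspose {d : ℕ} (M : Matrix (Fin d) (Fin d) ℝ) :
    M.transpose.charpoly = M.charpoly := by
  unfold Matrix.charpoly
  rw [← Matrix.det_transpose (charmatrix M)]
  congr 1
  ext i j
  by_cases h : i = j
  · simp [Matrix.charmatrix_apply, Matrix.transpose_apply, h]
  · have h' : ¬ j = i := fun hh => h hh.symm
    simp [Matrix.charmatrix_apply, Matrix.transpose_apply, h, h',
      Matrix.diagonal_apply]

lemma mySumRangeTwoMul {α : Type*} [AddCommMonoid α] (g : ℕ → α) (i : ℕ) :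
    ∑ r ∈ Finset.range (2 * i), g r = ∑ k ∈ Finset.range i, (g (2 * k) + g (2 * k + 1)) := by
  induction i with
  | zero => simp
  | succ i ih =>
    rw [show 2 * (i + 1) = 2 * i + 1 + 1 from by ring, Finset.sum_range_succ,
      Finset.sum_range_succ, ih, Finset.sum_range_succ, add_assoc]

lemma myEntryEven (N k c : ℕ) (f : ℝ[X]) (hdeg : f.natDegree ≤ N) :
    discEntry N (coeffSeq N f) (2 * k) c =
      if c ≤ N + k then f.coeff (N + k - c) else 0 := by
  unfold discEntry coeffSeq
  rw [if_pos (by omega : 2 * k % 2 = 0), show 2 * k / 2 = k from by omega]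
  split_ifs with h1 h2 h2
  · congr 1; omega
  · exfalso; omega
  · exact (Polynomial.coeff_eq_zero_of_natDegree_lt (by omega)).symm
  · rfl

lemma myEntryOdd (N k c : ℕ) (f : ℝ[X]) (hdeg : f.natDegree ≤ N) :
    discEntry N (coeffSeq N f) (2 * k + 1) c =
      if c ≤ N + k then (derivative f).coeff (N + k - c) else 0 := by
  unfold discEntry coeffSeq
  rw [if_neg (by omega : ¬ (2 * k + 1) % 2 = 0),
    show (2 * k + 1 + 1) / 2 = k + 1 from by omega]
  split_ifs with h1 h2 h2
  · rw [Polynomial.coeff_derivative,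
      show N - (c - (k + 1)) = N + k - c + 1 from by omega]
    push_cast [show N + k - c + 1 = (N + k - c) + 1 from rfl]
    ring
  · exfalso; omega
  · rw [Polynomial.coeff_derivative,
      Polynomial.coeff_eq_zero_of_natDegree_lt (by omega : f.natDegree < N + k - c + 1),
      zero_mul]
  · rfl

lemma mySumCoeffMul (u g : ℝ[X]) (i m : ℕ) (hu : u.natDegree < i) :
    ∑ j ∈ Finset.range i, u.coeff j * (if j ≤ m then g.coeff (m - j) else 0) =
      (u * g).coeff m := by
  rw [Polynomial.coeff_mul, Finset.Nat.sum_antidiagonal_eq_sum_range_succ_mk]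
  rcases le_total i (m + 1) with h | h
  · calc ∑ j ∈ Finset.range i, u.coeff j * (if j ≤ m then g.coeff (m - j) else 0)
        = ∑ j ∈ Finset.range i, u.coeff j * g.coeff (m - j) := by
          refine Finset.sum_congr rfl fun j hj => ?_
          rw [if_pos (by simp only [Finset.mem_range] at hj; omega)]
      _ = ∑ j ∈ Finset.range (m + 1), u.coeff j * g.coeff (m - j) := by
          refine Finset.sum_subset (Finset.range_subset_range.2 h) fun x _ hx => ?_
          rw [Polynomial.coeff_eq_zero_of_natDegree_lt
            (by simp only [Finset.mem_range, not_lt] at hx; omega), zero_mul]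
  · calc ∑ j ∈ Finset.range i, u.coeff j * (if j ≤ m then g.coeff (m - j) else 0)
        = ∑ j ∈ Finset.range (m + 1), u.coeff j * (if j ≤ m then g.coeff (m - j) else 0) := by
          refine (Finset.sum_subset (Finset.range_subset_range.2 h) fun x _ hx => ?_).symm
          rw [if_neg (by simp only [Finset.mem_range, not_lt] at hx; omega), mul_zero]
      _ = ∑ j ∈ Finset.range (m + 1), u.coeff j * g.coeff (m - j) := by
          refine Finset.sum_congr rfl fun j hj => ?_
          rw [if_pos (by simp only [Finset.mem_range] at hj; omega)]

lemma myVanish (N d e : ℕ) (hd : 1 ≤ d) (hN : N = 2 * d + e) (p q : ℝ[X])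
    (hp : p.Monic) (hq : q.Monic) (hpd : p.natDegree = d) (hqd : q.natDegree = e)
    (i : ℕ) (hi1 : d + e + 1 ≤ i) (hi2 : i ≤ N) :
    discD N (coeffSeq N (p ^ 2 * q)) i = 0 := by
  have hfdeg : (p ^ 2 * q).natDegree = N := by
    rw [Polynomial.natDegree_mul (pow_ne_zero 2 hp.ne_zero) hq.ne_zero,
      Polynomial.natDegree_pow]
    omega
  have hpq_deg : (p * q).natDegree = d + e := by
    rw [Polynomial.natDegree_mul hp.ne_zero hq.ne_zero]; omega
  obtain ⟨u, hdfu, hudeg⟩ :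
      ∃ u : ℝ[X], derivative (p ^ 2 * q) = p * u ∧ u.natDegree < i := by
    refine ⟨Polynomial.C (2 : ℝ) * derivative p * q + p * derivative q, ?_, ?_⟩
    · rw [derivative_mul, derivative_pow]
      push_cast
      ring
    · have hp' : (derivative p).natDegree ≤ d - 1 := by
        have := Polynomial.natDegree_derivative_le p; omega
      have hq' : (derivative q).natDegree ≤ e - 1 := by
        have := Polynomial.natDegree_derivative_le q; omega
      have h1 : (Polynomial.C (2 : ℝ) * derivative p * q).natDegree ≤ (d - 1) + e := by
        refine le_trans Polynomial.natDegree_mul_le (add_le_add ?_ hqd.le)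
        refine le_trans Polynomial.natDegree_mul_le ?_
        simp only [Polynomial.natDegree_C, zero_add]
        exact hp'
      have h2 : (p * derivative q).natDegree ≤ d + (e - 1) :=
        le_trans Polynomial.natDegree_mul_le (add_le_add hpd.le hq')
      have h3 := Polynomial.natDegree_add_le (Polynomial.C (2 : ℝ) * derivative p * q)
        (p * derivative q)
      omega
  have hwdeg : (-(p * q)).natDegree < i := by
    rw [Polynomial.natDegree_neg]; omega
  have hrel : u * (p ^ 2 * q) + -(p * q) * derivative (p ^ 2 * q) = 0 := by
    rw [hdfu]; ring
  unfold discD discMinor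
  apply (Matrix.exists_vecMul_eq_zero_iff).mp
  refine ⟨fun r => if r.val % 2 = 0 then u.coeff (i - 1 - r.val / 2)
      else (-(p * q)).coeff (i - 1 - r.val / 2), ?_, ?_⟩
  · intro hcon
    have hz : (if (2 * (i - 1 - (d + e)) + 1) % 2 = 0 then
          u.coeff (i - 1 - (2 * (i - 1 - (d + e)) + 1) / 2)
        else (-(p * q)).coeff (i - 1 - (2 * (i - 1 - (d + e)) + 1) / 2)) = (0 : ℝ) :=
      congrFun hcon ⟨2 * (i - 1 - (d + e)) + 1, by omega⟩
    rw [if_neg (by omega),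
      show i - 1 - (2 * (i - 1 - (d + e)) + 1) / 2 = d + e from by omega] at hz
    have hone : (p * q).coeff (d + e) = 1 := by
      have := (hp.mul hq).coeff_natDegree
      rwa [hpq_deg] at this
    rw [Polynomial.coeff_neg, hone] at hz
    norm_num at hz
  · funext c
    have hcle : (c : ℕ) ≤ N + i - 1 := by omega
    show ∑ r : Fin (2 * i), _ = _
    simp only [Matrix.vecMul, dotProduct, Matrix.of_apply, Pi.zero_apply]
    rw [Fin.sum_univ_eq_sum_range (fun r : ℕ =>
      (if r % 2 = 0 then u.coeff (i - 1 - r / 2) else (-(p * q)).coeff (i - 1 - r / 2)) *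
        discEntry N (coeffSeq N (p ^ 2 * q)) r c.val)]
    rw [mySumRangeTwoMul]
    have step1 : ∀ k ∈ Finset.range i,
        (if 2 * k % 2 = 0 then u.coeff (i - 1 - 2 * k / 2)
            else (-(p * q)).coeff (i - 1 - 2 * k / 2)) *
          discEntry N (coeffSeq N (p ^ 2 * q)) (2 * k) c.val +
        (if (2 * k + 1) % 2 = 0 then u.coeff (i - 1 - (2 * k + 1) / 2)
            else (-(p * q)).coeff (i - 1 - (2 * k + 1) / 2)) *
          discEntry N (coeffSeq N (p ^ 2 * q)) (2 * k + 1) c.val =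
        u.coeff (i - 1 - k) *
            (if (c : ℕ) ≤ N + k then (p ^ 2 * q).coeff (N + k - c.val) else 0) +
          (-(p * q)).coeff (i - 1 - k) *
            (if (c : ℕ) ≤ N + k then (derivative (p ^ 2 * q)).coeff (N + k - c.val) else 0) := by
      intro k hk
      rw [if_pos (by omega : 2 * k % 2 = 0), if_neg (by omega : ¬ (2 * k + 1) % 2 = 0),
        show 2 * k / 2 = k from by omega, show (2 * k + 1) / 2 = k from by omega,
        myEntryEven N k c.val _ hfdeg.le, myEntryOdd N k c.val _ hfdeg.le]
    rw [Finset.sum_congr rfl step1, Finset.sum_add_distrib]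
    have reflect : ∀ (v g : ℝ[X]), v.natDegree < i →
        ∑ k ∈ Finset.range i, v.coeff (i - 1 - k) *
          (if (c : ℕ) ≤ N + k then g.coeff (N + k - c.val) else 0) =
        (v * g).coeff (N + i - 1 - c.val) := by
      intro v g hv
      rw [← mySumCoeffMul v g i (N + i - 1 - c.val) hv,
        ← Finset.sum_range_reflect (fun j => v.coeff j *
          (if j ≤ N + i - 1 - c.val then g.coeff (N + i - 1 - c.val - j) else 0)) i]
      refine Finset.sum_congr rfl fun k hk => ?_
      simp only [Finset.mem_range] at hk
      congr 1
      by_cases hcase : (c : ℕ) ≤ N + k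
      · rw [if_pos hcase, if_pos (by omega)]
        congr 1
        omega
      · rw [if_neg hcase, if_neg (by omega)]
    rw [reflect u (p ^ 2 * q) hudeg, reflect (-(p * q)) (derivative (p ^ 2 * q)) hwdeg,
      ← Polynomial.coeff_add, hrel, Polynomial.coeff_zero]

/-- **Type II/D syzygies in arbitrary dimension.**
Let `d ≥ 1`, `e ≥ 0`, `N = 2d + e`, and let `C` be the `N × N` real block lower-triangular
matrix with diagonal blocks `M` (`d × d`), `Ψ` (`e × e`) and `Mᵀ`.  Then `C` has at most
`N − d` distinct eigenvalues in `ℂ`, and the discriminant sequence of its characteristic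
polynomial satisfies `ᴺD_N = ᴺD_{N−1} = ⋯ = ᴺD_{N−d+1} = 0`. -/
theorem stmt14 (d e N : ℕ) (hd : 1 ≤ d) (hN : N = 2 * d + e)
    (M : Matrix (Fin d) (Fin d) ℝ) (Ψ : Matrix (Fin e) (Fin e) ℝ)
    (B₁ : Matrix (Fin e ⊕ Fin d) (Fin d) ℝ) (B₂ : Matrix (Fin d) (Fin e) ℝ)
    (C : Matrix (Fin d ⊕ (Fin e ⊕ Fin d)) (Fin d ⊕ (Fin e ⊕ Fin d)) ℝ)
    (hC : C = Matrix.fromBlocks M 0 B₁ (Matrix.fromBlocks Ψ 0 B₂ M.transpose)) :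
    (C.charpoly.map (algebraMap ℝ ℂ)).roots.toFinset.card ≤ N - d ∧
    (∀ i, N - d + 1 ≤ i → i ≤ N → polyDiscD N C.charpoly i = 0) := by
  have hpmon : M.charpoly.Monic := Matrix.charpoly_monic M
  have hqmon : Ψ.charpoly.Monic := Matrix.charpoly_monic Ψ
  have hpd : M.charpoly.natDegree = d := by
    rw [Matrix.charpoly_natDegree_eq_dim, Fintype.card_fin]
  have hqd : Ψ.charpoly.natDegree = e := by
    rw [Matrix.charpoly_natDegree_eq_dim, Fintype.card_fin]
  have hf : C.charpoly = M.charpoly ^ 2 * Ψ.charpoly := by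
    rw [hC, Matrix.charpoly_fromBlocks_zero₁₂, Matrix.charpoly_fromBlocks_zero₁₂,
      myCharpolyTranspose]
    ring
  constructor
  · have hPmon : (M.charpoly.map (algebraMap ℝ ℂ)).Monic := hpmon.map _
    have hQmon : (Ψ.charpoly.map (algebraMap ℝ ℂ)).Monic := hqmon.map _
    rw [hf, Polynomial.map_mul, Polynomial.map_pow,
      Polynomial.roots_mul (mul_ne_zero (pow_ne_zero 2 hPmon.ne_zero) hQmon.ne_zero),
      Polynomial.roots_pow, Multiset.toFinset_add,
      Multiset.toFinset_nsmul _ 2 (by norm_num)]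
    have h1 : (M.charpoly.map (algebraMap ℝ ℂ)).roots.toFinset.card ≤ d := by
      refine le_trans (Multiset.toFinset_card_le _) (le_trans (Polynomial.card_roots' _) ?_)
      rw [hpmon.natDegree_map, hpd]
    have h2 : (Ψ.charpoly.map (algebraMap ℝ ℂ)).roots.toFinset.card ≤ e := by
      refine le_trans (Multiset.toFinset_card_le _) (le_trans (Polynomial.card_roots' _) ?_)
      rw [hqmon.natDegree_map, hqd]
    have h3 := Finset.card_union_le (M.charpoly.map (algebraMap ℝ ℂ)).roots.toFinset
      (Ψ.charpoly.map (algebraMap ℝ ℂ)).roots.toFinset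
    omega
  · intro i hi1 hi2
    rw [hf]
    exact myVanish N d e hd hN M.charpoly Ψ.charpoly hpmon hqmon hpd hqd i (by omega) hi2
end

section
/- Let f be a monic real polynomial of degree n, let t be a nonzero real number, and let f_t(x) = tⁿ·f(x/t) be the monic polynomial of degree n whose roots are t times the roots of f. Then for every i = 1, …, n, the discriminant sequence scales as ⁿD_i(f_t) = t^{i(i−1)}·ⁿD_i(f); that is, ⁿD_i is weighted-homogeneous of degree i(i−1) in the roots, corresponding to the order 𝒪(ⁿD_i) ∼ R^{i(i−1)} of the i-th discriminant in the curvature. -/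
open Polynomial Matrix

lemma aux_coeff_comp (p : Polynomial ℝ) (a : ℝ) (k : ℕ) :
    (p.comp (Polynomial.C a * Polynomial.X)).coeff k = p.coeff k * a ^ k := by
  induction p using Polynomial.induction_on' with
  | add p q hp hq => simp [Polynomial.add_comp, hp, hq, add_mul]
  | monomial m b =>
    simp only [Polynomial.monomial_comp, mul_pow, ← Polynomial.C_pow,
      Polynomial.coeff_monomial, ← mul_assoc, ← Polynomial.C_mul,
      Polynomial.coeff_C_mul, Polynomial.coeff_X_pow]
    rcases eq_or_ne k m with h | h
    · subst h; simp
    · simp [h, Ne.symm h]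

lemma aux_sum1 (i : ℕ) : ∑ r ∈ Finset.range (2*i), (r+1)/2 = i*i := by
  induction i with
  | zero => simp
  | succ m ih =>
    have h : 2*(m+1) = (2*m)+1+1 := by ring
    rw [h, Finset.sum_range_succ, Finset.sum_range_succ, ih]
    have e1 : (2*m+1+1)/2 = m+1 := by omega
    have e2 : (2*m+1)/2 = m := by omega
    rw [e1, e2]; ring

lemma aux_sum2 (i : ℕ) : ∑ r ∈ Finset.range (2*i), r = i*(2*i-1) := by
  have h := Finset.sum_range_id_mul_two (2*i)
  have h2 : i*(2*i-1)*2 = 2*i*(2*i-1) := by ring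
  omega


/-- **Weighted homogeneity of the discriminant sequence.**
Let `f` be a monic real polynomial of degree `n`, `t ≠ 0`, and let `f_t(x) = tⁿ·f(x/t)` be
the monic degree-`n` polynomial whose roots are `t` times the roots of `f`.  Then for every
`i = 1, …, n` one has `ⁿD_i(f_t) = t^{i(i−1)}·ⁿD_i(f)`, i.e. `ⁿD_i` is weighted-homogeneous
of degree `i(i−1)` in the roots (the order `𝒪(ⁿD_i) ∼ R^{i(i−1)}` in the curvature). -/
theorem stmt19 (n : ℕ) (hn : 0 < n) (f : Polynomial ℝ) (hmon : f.Monic)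
    (hdeg : f.natDegree = n) (t : ℝ) (ht : t ≠ 0) (ft : Polynomial ℝ)
    (hft : ft = Polynomial.C (t ^ n) * f.comp (Polynomial.C t⁻¹ * Polynomial.X)) :
    ∀ i, 1 ≤ i → i ≤ n → polyDiscD n ft i = t ^ (i * (i - 1)) * polyDiscD n f i := by
  -- coefficient scaling
  have hcs : ∀ j, j ≤ n → coeffSeq n ft j = t ^ j * coeffSeq n f j := by
    intro j hj
    have hk : n - j ≤ n := Nat.sub_le _ _
    have : ft.coeff (n - j) = t ^ (n - (n - j)) * f.coeff (n - j) := by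
      rw [hft, Polynomial.coeff_C_mul, aux_coeff_comp,
        pow_sub₀ t ht hk, inv_pow]
      field_simp
    simpa [coeffSeq, Nat.sub_sub_self hj] using this
  -- entrywise scaling
  have hent : ∀ r c : ℕ,
      t ^ ((r + 1) / 2) * discEntry n (coeffSeq n ft) r c
        = t ^ c * discEntry n (coeffSeq n f) r c := by
    intro r c
    unfold discEntry
    by_cases hr : r % 2 = 0
    · simp only [hr, if_true]
      have hdiv : (r + 1) / 2 = r / 2 := by omega
      rw [hdiv]
      by_cases hc : r / 2 ≤ c ∧ c ≤ r / 2 + n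
      · rw [if_pos hc, if_pos hc]
        rw [hcs (c - r / 2) (by omega)]
        rw [← mul_assoc, ← pow_add, show r / 2 + (c - r / 2) = c by omega]
      · simp [hc]
    · simp only [hr, if_false]
      by_cases hc : (r + 1) / 2 ≤ c ∧ c + 1 ≤ (r + 1) / 2 + n
      · rw [if_pos hc, if_pos hc]
        rw [hcs (c - (r + 1) / 2) (by omega)]
        rw [show t ^ ((r+1)/2) * (((n - (c - (r + 1) / 2) : ℕ) : ℝ) *
              (t ^ (c - (r + 1) / 2) * coeffSeq n f (c - (r + 1) / 2)))
            = (t ^ ((r+1)/2) * t ^ (c - (r + 1) / 2)) *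
              (((n - (c - (r + 1) / 2) : ℕ) : ℝ) * coeffSeq n f (c - (r + 1) / 2)) by ring]
        rw [← pow_add, show (r+1)/2 + (c - (r + 1) / 2) = c by omega]
      · rw [if_neg hc, if_neg hc]; simp
    all_goals try rfl
  intro i hi1 _hin
  -- matrix identity
  set Mft : Matrix (Fin (2*i)) (Fin (2*i)) ℝ :=
    Matrix.of fun r c : Fin (2*i) => discEntry n (coeffSeq n ft) r.val c.val with hMft
  set Mf : Matrix (Fin (2*i)) (Fin (2*i)) ℝ :=
    Matrix.of fun r c : Fin (2*i) => discEntry n (coeffSeq n f) r.val c.val with hMf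
  have hmat : Matrix.diagonal (fun r : Fin (2*i) => t ^ ((r.val + 1) / 2)) * Mft
      = Mf * Matrix.diagonal (fun c : Fin (2*i) => t ^ c.val) := by
    ext r c
    rw [Matrix.diagonal_mul, Matrix.mul_diagonal]
    rw [mul_comm (Mf r c)]
    exact hent r.val c.val
  have hdet := congrArg Matrix.det hmat
  rw [Matrix.det_mul, Matrix.det_mul, Matrix.det_diagonal, Matrix.det_diagonal] at hdet
  rw [Finset.prod_pow_eq_pow_sum, Finset.prod_pow_eq_pow_sum] at hdet
  have hs1 : (∑ r : Fin (2*i), ((r.val + 1) / 2)) = i * i := by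
    rw [Fin.sum_univ_eq_sum_range (fun r => (r + 1) / 2)]
    exact aux_sum1 i
  have hs2 : (∑ c : Fin (2*i), c.val) = i * (2*i - 1) := by
    rw [Fin.sum_univ_eq_sum_range (fun c => c)]
    exact aux_sum2 i
  rw [hs1, hs2] at hdet
  have hexp : i * (2*i - 1) = i * i + i * (i - 1) := by
    obtain ⟨m, rfl⟩ := Nat.exists_eq_add_of_le hi1
    have h1 : 2 * (1 + m) - 1 = 2 * m + 1 := by omega
    have h2 : (1 + m) - 1 = m := by omega
    rw [h1, h2]; ring
  rw [hexp, pow_add] at hdet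
  have hD : polyDiscD n ft i = Mft.det := rfl
  have hD' : polyDiscD n f i = Mf.det := rfl
  rw [hD, hD']
  apply mul_left_cancel₀ (pow_ne_zero (i*i) ht)
  rw [hdet]; ring
end
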